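/- arXiv:1610.03126 — 3 statements merged into one kernel-verified Lean document; each statement's English description precedes it below -/
import Mathlib

section
/- Let G be a group and a ∈ G an almost Engel element whose minimal Engel sink E(a) is finite and contained in a locally nilpotent subgroup of G. Then the subgroup ⟨E(a)⟩ generated by E(a) is finite. -/
open scoped commutatorElement

/-- The iterated Engel commutator `[x, n a]`. -/
def engel {G : Type*} [Group G] (a x : G) : ℕ → G
  | 0 => x
  | n + 1 => ⁅engel a x n, a⁆

/-- A finite set `S` is a sink-candidate for `a`. -/
def IsSink {G : Type*} [Group G] (a : G) (S : Set G) : Prop :=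
  S.Finite ∧ ∀ x : G, ∃ N : ℕ, ∀ n ≥ N, engel a x n ∈ S

/-!
Write `f x = ⁅x, a⁆ = x * (a * x * a⁻¹)⁻¹`. Since `f '' E` is again a sink, minimality gives
`f '' E = E`; hence `H = ⟨E⟩` is invariant under conjugation by `a`, and inside `H` every
`f`-orbit eventually lands in `E`. As `H` is finitely generated and nilpotent, induct on its class.
If `H` is abelian, `f` is an endomorphism of `H` whose image contains `E`, so it is onto and thus
injective (`H` is a Noetherian `ℤ`-module); as `f` permutes `E` and every orbit reaches `E`,
`H = E`. Otherwise, let `K` be the last nontrivial term of the lower central series: it is central,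
lies in `H'` and is invariant under conjugation by `a`. By induction `H ⧸ K` is finite, so `Z(H)`
has finite index, `H` has finitely many commutators and `H'` is finite by Schur's theorem;
hence `K`, and with it `H`, is finite.
-/

open Subgroup Function

section Center

variable {H : Type*} [Group H]

theorem commutatorElement_mul_mem_center {x y z w : H} (hz : z ∈ center H) (hw : w ∈ center H) :
    ⁅x * z, y * w⁆ = ⁅x, y⁆ := by
  rw [mem_center_iff] at hz hw
  calc ⁅x * z, y * w⁆ = x * (z * (y * w)) * z⁻¹ * x⁻¹ * w⁻¹ * y⁻¹ := by
        rw [commutatorElement_def]; group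
    _ = x * y * (x⁻¹ * w) * w⁻¹ * y⁻¹ := by rw [← hz (y * w), hw x⁻¹]; group
    _ = ⁅x, y⁆ := by rw [commutatorElement_def]; group

theorem finite_commutatorSet_of_finiteIndex_center [FiniteIndex (center H)] :
    Finite (commutatorSet H) := by
  refine Finite.of_surjective
    (fun p : (H ⧸ center H) × (H ⧸ center H) => (⟨⁅p.1.out, p.2.out⁆, p.1.out, p.2.out, rfl⟩ :
      commutatorSet H)) ?_
  rintro ⟨_, x, y, rfl⟩
  obtain ⟨z, hz⟩ := QuotientGroup.mk_out_eq_mul (center H) x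
  obtain ⟨w, hw⟩ := QuotientGroup.mk_out_eq_mul (center H) y
  exact ⟨(x, y), Subtype.ext (by simp only [hz, hw, commutatorElement_mul_mem_center z.2 w.2])⟩

theorem finite_of_finite_quotient_of_le_center_of_le_commutator {K : Subgroup H} [Finite (H ⧸ K)]
    (hKZ : K ≤ center H) (hKcomm : K ≤ commutator H) : Finite H := by
  have : FiniteIndex K := finiteIndex_of_finite_quotient
  have : FiniteIndex (center H) := finiteIndex_of_le hKZ
  have : Finite (commutatorSet H) := finite_commutatorSet_of_finiteIndex_center
  have : Finite K := Finite.of_injective (inclusion hKcomm) (inclusion_injective hKcomm)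
  exact Finite.of_subgroup_quotient K

end Center

section TwistedCommutator

variable {H Q : Type*} [Group H] [Group Q]

def twistedCommutator (ψ : H →* H) (x : H) : H := x * (ψ x)⁻¹

theorem twistedCommutator_semiconj {ψ : H →* H} {ψ' : Q →* Q} (π : H →* Q)
    (hπ : π.comp ψ = ψ'.comp π) : Semiconj π (twistedCommutator ψ) (twistedCommutator ψ') := by
  intro x
  simp only [twistedCommutator, map_mul, map_inv, ← MonoidHom.comp_apply, hπ]

structure IsTwistedSink (ψ : H →* H) (E : Set H) : Prop where
  finite : E.Finite
  image_eq : twistedCommutator ψ '' E = E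
  exists_iterate_mem (x : H) : ∃ n, (twistedCommutator ψ)^[n] x ∈ E

namespace IsTwistedSink

variable {ψ : H →* H} {ψ' : Q →* Q} {E : Set H}

theorem mem_of_injective (hE : IsTwistedSink ψ E) (hinj : Injective (twistedCommutator ψ))
    (x : H) : x ∈ E := by
  obtain ⟨n, hn⟩ := hE.exists_iterate_mem x
  rw [← IsFixedPt.image_iterate hE.image_eq n] at hn
  exact (hinj.iterate n).mem_set_image.mp hn

theorem map_closure_le (hE : IsTwistedSink ψ E) : (closure E).map ψ ≤ closure E := by
  rw [MonoidHom.map_closure, closure_le]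
  rintro _ ⟨e, he, rfl⟩
  have hw : twistedCommutator ψ e ∈ E := hE.image_eq ▸ Set.mem_image_of_mem _ he
  have hψe : ψ e = (twistedCommutator ψ e)⁻¹ * e := by simp [twistedCommutator]
  rw [hψe]
  exact mul_mem (inv_mem (subset_closure hw)) (subset_closure he)

theorem map (hE : IsTwistedSink ψ E) (π : H →* Q) (hsurj : Surjective π)
    (hπ : π.comp ψ = ψ'.comp π) : IsTwistedSink ψ' (π '' E) where
  finite := hE.finite.image π
  image_eq := by rw [← (twistedCommutator_semiconj π hπ).set_image, hE.image_eq]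
  exists_iterate_mem y := by
    obtain ⟨x, rfl⟩ := hsurj y
    obtain ⟨n, hn⟩ := hE.exists_iterate_mem x
    exact ⟨n, ((twistedCommutator_semiconj π hπ).iterate_right n x) ▸ Set.mem_image_of_mem π hn⟩

theorem comap (hE : IsTwistedSink ψ E) (ι : Q →* H) (hinj : Injective ι)
    (hι : ι.comp ψ' = ψ.comp ι) (hEι : E ⊆ Set.range ι) : IsTwistedSink ψ' (ι ⁻¹' E) where
  finite := hE.finite.preimage hinj.injOn
  image_eq := by
    apply Set.image_injective.mpr hinj
    rw [(twistedCommutator_semiconj ι hι).set_image, Set.image_preimage_eq_of_subset hEι,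
      hE.image_eq]
  exists_iterate_mem x := by
    obtain ⟨n, hn⟩ := hE.exists_iterate_mem (ι x)
    exact ⟨n, by rwa [Set.mem_preimage, (twistedCommutator_semiconj ι hι).iterate_right n x]⟩

open scoped IsMulCommutative in
theorem finite_of_isMulCommutative [IsMulCommutative H] (hE : IsTwistedSink ψ E)
    (hgen : closure E = ⊤) : Finite H := by
  let W : H →* H := MonoidHom.id H / ψ
  have hW : ⇑W = twistedCommutator ψ := funext fun x => div_eq_mul_inv x (ψ x)
  have hsurj : Surjective W := by
    rw [← MonoidHom.range_eq_top, MonoidHom.range_eq_map, ← hgen, MonoidHom.map_closure, hW,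
      hE.image_eq]
  have : Group.FG H := Group.fg_iff.mpr ⟨E, hgen, hE.finite⟩
  have : Module.Finite ℤ (Additive H) := Module.Finite.iff_addGroup_fg.mpr inferInstance
  have hinj : Injective W :=
    OrzechProperty.injective_of_surjective_endomorphism W.toAdditive.toIntLinearMap hsurj
  exact Set.finite_univ_iff.mp (hE.finite.subset fun x _ => hE.mem_of_injective (hW ▸ hinj) x)

theorem finite_of_lowerCentralSeries_succ_eq_bot {c : ℕ}
    (hc : (⊤ : Subgroup H).lowerCentralSeries (c + 1) = ⊥) (hE : IsTwistedSink ψ E)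
    (hgen : closure E = ⊤) : Finite H := by
  induction c generalizing H with
  | zero =>
    have : IsMulCommutative H := by
      rwa [zero_add, top_lowerCentralSeries_one, commutator_eq_bot_iff] at hc
    exact hE.finite_of_isMulCommutative hgen
  | succ c ih =>
    set K := (⊤ : Subgroup H).lowerCentralSeries (c + 1)
    have hKψ : K.map ψ ≤ K := by
      rw [map_lowerCentralSeries]; exact lowerCentralSeries_mono _ le_top
    have hsurj := QuotientGroup.mk'_surjective K
    have : Finite (H ⧸ K) := by
      refine ih (ψ := QuotientGroup.map K K ψ (map_le_iff_le_comap.mp hKψ)) ?_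
        (hE.map (QuotientGroup.mk' K) hsurj ?_) ?_
      · rw [← map_top_of_surjective _ hsurj, ← map_lowerCentralSeries, Subgroup.map_eq_bot_iff,
          QuotientGroup.ker_mk']
      · ext x; rfl
      · rw [← MonoidHom.map_closure, hgen, map_top_of_surjective _ hsurj]
    have hKZ : K ≤ center H := commutator_top_right_eq_bot_iff_le_center.mp hc
    have hKcomm : K ≤ commutator H :=
      top_lowerCentralSeries_one (G := H) ▸
        (⊤ : Subgroup H).lowerCentralSeries_antitone (by omega)
    exact finite_of_finite_quotient_of_le_center_of_le_commutator hKZ hKcomm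

theorem finite_closure (hE : IsTwistedSink ψ E) (hnil : Group.IsNilpotent (closure E)) :
    (closure E : Set H).Finite := by
  set S := closure E
  let ψS : S →* S :=
    (ψ.comp S.subtype).codRestrict S fun x => hE.map_closure_le (mem_map_of_mem ψ x.2)
  have hS : IsTwistedSink ψS (S.subtype ⁻¹' E) :=
    hE.comap S.subtype S.subtype_injective rfl
      (by rw [coe_subtype, Subtype.range_coe]; exact Subgroup.subset_closure)
  obtain ⟨c, hc⟩ := Subgroup.nilpotent_iff_lowerCentralSeries.mp hnil
  have : Finite S := hS.finite_of_lowerCentralSeries_succ_eq_bot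
    (eq_bot_mono ((⊤ : Subgroup S).lowerCentralSeries_antitone c.le_succ) hc)
    closure_closure_coe_preimage
  exact Set.toFinite _

end IsTwistedSink

end TwistedCommutator

section Engel

variable {G : Type*} [Group G] {a : G} {E : Set G}

theorem twistedCommutator_conj (a : G) :
    twistedCommutator (MulAut.conj a).toMonoidHom = (⁅·, a⁆) := by
  ext x
  simp [twistedCommutator, commutatorElement_def, mul_assoc]

theorem engel_eq_iterate (a x : G) (n : ℕ) : engel a x n = (⁅·, a⁆)^[n] x := by
  induction n with
  | zero => rfl
  | succ n ih => rw [iterate_succ_apply', ← ih]; rfl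

theorem IsSink.image_commutator (hE : IsSink a E) : IsSink a ((⁅·, a⁆) '' E) := by
  refine ⟨hE.1.image _, fun x => ?_⟩
  obtain ⟨N, hN⟩ := hE.2 x
  refine ⟨N + 1, fun n hn => ?_⟩
  obtain ⟨m, rfl⟩ : ∃ m, n = m + 1 := ⟨n - 1, by omega⟩
  exact ⟨engel a x m, hN m (by omega), rfl⟩

theorem IsSink.isTwistedSink (hE : IsSink a E) (hmin : ∀ T : Set G, IsSink a T → E ⊆ T) :
    IsTwistedSink (MulAut.conj a).toMonoidHom E where
  finite := hE.1
  image_eq := by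
    rw [twistedCommutator_conj]
    exact (Set.eq_of_subset_of_ncard_le (hmin _ hE.image_commutator) (Set.ncard_image_le hE.1)
      (hE.1.image _)).symm
  exists_iterate_mem x := by
    obtain ⟨N, hN⟩ := hE.2 x
    exact ⟨N, by rw [twistedCommutator_conj, ← engel_eq_iterate]; exact hN N le_rfl⟩

end Engel

theorem stmt_12 {G : Type*} [Group G] (a : G) (E : Set G)
    (hE : IsSink a E) (hmin : ∀ T : Set G, IsSink a T → E ⊆ T)
    (L : Subgroup G)
    (hLnil : ∀ S : Finset G, (S : Set G) ⊆ (L : Set G) →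
      Group.IsNilpotent ↥(Subgroup.closure (S : Set G)))
    (hEL : E ⊆ (L : Set G)) :
    ((Subgroup.closure E : Subgroup G) : Set G).Finite := by
  have hnil := hLnil hE.1.toFinset (by rwa [hE.1.coe_toFinset])
  rw [hE.1.coe_toFinset] at hnil
  exact (hE.isTwistedSink hmin).finite_closure hnil
end

section
/- Let D be an abelian group, a an element of a group G containing D with D normalized by a, such that D = [D, a] (D is generated by, and equals, the set of commutators it generates, with [D,a] = D as subgroups). If a is almost Engel on D with minimal sink E(a) and D = ⟨E(a)⟩ with D abelian and D = [D,a], then D = E(a) as sets and hence D is finite. -/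
open scoped commutatorElement

/-- A finite set `S` is a sink-candidate for `a` restricted to a set `K`. -/
def IsSinkOn {G : Type*} [Group G] (a : G) (K : Set G) (S : Set G) : Prop :=
  S.Finite ∧ ∀ x ∈ K, ∃ N : ℕ, ∀ n ≥ N, engel a x n ∈ S

/-!
Since `D` is abelian and normalized by `a`, the map `d ↦ [d, a]` is an endomorphism `ψ` of `D`
whose iterates are the Engel sequences `n ↦ [d, n a]`. It is surjective because `[D, a] = D`,
and `D` is finitely generated by the finite set `E(a)`, so `ψ` is injective (finitely generated
abelian groups are Hopfian). If the orbit of `d` under an injective map eventually stays in a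
finite set, two points of the orbit coincide, so `d` is periodic and returns to itself inside
that set: hence `D ⊆ E(a)`. Conversely `E(a) ∩ D` is again a sink, so `E(a) ⊆ D` by minimality.
-/

open Function

theorem Function.Injective.mem_of_forall_iterate_mem {α : Type*} {f : α → α}
    (hf : Injective f) {S : Set α} (hS : S.Finite) {x : α} {N : ℕ}
    (hN : ∀ n ≥ N, f^[n] x ∈ S) : x ∈ S := by
  obtain ⟨m, n, hmn, heq⟩ := hS.exists_lt_map_eq_of_forall_mem (f := fun n ↦ f^[N + n] x)
    fun n ↦ hN _ (Nat.le_add_right N n)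
  have hper : IsPeriodicPt f (n - m) x := by
    have := iterate_cancel hf heq.symm
    rwa [Nat.add_sub_add_left] at this
  rw [← (hper.mul_const N).eq]
  exact hN _ (Nat.le_mul_of_pos_left N (by omega))

open scoped IsMulCommutative in
theorem MonoidHom.injective_of_surjective_of_fg {A : Type*} [Group A] [IsMulCommutative A]
    [Group.FG A] (f : A →* A) (hf : Surjective f) : Injective f := by
  have : Module.Finite ℤ (Additive A) :=
    Module.Finite.iff_addGroup_fg.mpr (GroupFG.iff_add_fg.mp ‹_›)
  exact IsNoetherian.injective_of_surjective_endomorphism f.toAdditive.toIntLinearMap hf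

section Engel

variable {G : Type*} [Group G]

theorem engel_mem {D : Subgroup G} {a : G} (h : ∀ d ∈ D, ⁅d, a⁆ ∈ D) {x : G} (hx : x ∈ D)
    (n : ℕ) : engel a x n ∈ D := by
  induction n with
  | zero => exact hx
  | succ n ih => exact h _ ih

theorem IsSinkOn.inter {a : G} {K S : Set G} (hS : IsSinkOn a K S)
    (hK : ∀ x ∈ K, ∀ n, engel a x n ∈ K) : IsSinkOn a K (S ∩ K) := by
  refine ⟨hS.1.subset Set.inter_subset_left, fun x hx ↦ ?_⟩
  obtain ⟨N, hN⟩ := hS.2 x hx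
  exact ⟨N, fun n hn ↦ ⟨hN n hn, hK x hx n⟩⟩

end Engel

namespace Subgroup

open scoped IsMulCommutative

variable {G : Type*} [Group G] (D : Subgroup G) [IsMulCommutative D] (a : G)

def commutatorElementHom (h : ∀ d ∈ D, ⁅d, a⁆ ∈ D) : D →* D where
  toFun d := ⟨⁅(d : G), a⁆, h d d.2⟩
  map_one' := by ext; simp
  map_mul' d e := by
    set cd : D := ⟨⁅(d : G), a⁆, h d d.2⟩
    set ce : D := ⟨⁅(e : G), a⁆, h e e.2⟩
    ext
    change ⁅(d : G) * e, a⁆ = ⁅(d : G), a⁆ * ⁅(e : G), a⁆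
    rw [commutatorElement_mul_left_eq_conj_mul]
    exact congrArg Subtype.val (show d * ce * d⁻¹ * cd = cd * ce by
      rw [mul_inv_cancel_comm, mul_comm])

variable {D a}

@[simp]
theorem coe_commutatorElementHom (h : ∀ d ∈ D, ⁅d, a⁆ ∈ D) (d : D) :
    (D.commutatorElementHom a h d : G) = ⁅(d : G), a⁆ :=
  rfl

theorem coe_iterate_commutatorElementHom (h : ∀ d ∈ D, ⁅d, a⁆ ∈ D) (d : D) (n : ℕ) :
    ((D.commutatorElementHom a h)^[n] d : G) = engel a d n := by
  induction n with
  | zero => rfl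
  | succ n ih => rw [iterate_succ_apply', coe_commutatorElementHom, ih]; rfl

theorem commutatorElementHom_surjective (h : ∀ d ∈ D, ⁅d, a⁆ ∈ D)
    (hcomm : closure {x : G | ∃ d ∈ D, x = ⁅d, a⁆} = D) :
    Surjective (D.commutatorElementHom a h) := by
  intro x
  have hle :
      closure {x : G | ∃ d ∈ D, x = ⁅d, a⁆} ≤ (D.commutatorElementHom a h).range.map D.subtype := by
    rw [closure_le]
    rintro _ ⟨d, hd, rfl⟩
    exact ⟨_, ⟨⟨d, hd⟩, rfl⟩, rfl⟩
  obtain ⟨_, ⟨y, rfl⟩, hy⟩ := hle (by rw [hcomm]; exact x.2)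
  exact ⟨y, Subtype.ext hy⟩

end Subgroup

theorem stmt_13 {G : Type*} [Group G] (D : Subgroup G) (hD : IsMulCommutative D) (a : G)
    (E : Set G)
    (hE : IsSinkOn a (D : Set G) E)
    (hmin : ∀ T : Set G, IsSinkOn a (D : Set G) T → E ⊆ T)
    (hgenE : Subgroup.closure E = D)
    (hcomm : Subgroup.closure {x : G | ∃ d ∈ D, x = ⁅d, a⁆} = D) :
    E = (D : Set G) ∧ ((D : Subgroup G) : Set G).Finite := by
  have hmem : ∀ d ∈ D, ⁅d, a⁆ ∈ D := fun d hd ↦ hcomm ▸ Subgroup.subset_closure ⟨d, hd, rfl⟩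
  have hED : E ⊆ D :=
    (hmin _ (hE.inter fun _ hx ↦ engel_mem hmem hx)).trans Set.inter_subset_right
  have : Group.FG D := (Group.fg_iff_subgroup_fg D).mpr ((Subgroup.fg_iff D).mpr ⟨E, hgenE, hE.1⟩)
  have hinj : Injective (D.commutatorElementHom a hmem) :=
    MonoidHom.injective_of_surjective_of_fg _
      (Subgroup.commutatorElementHom_surjective hmem hcomm)
  have hDE : (D : Set G) ⊆ E := fun x hx ↦ by
    obtain ⟨N, hN⟩ := hE.2 x hx
    refine hinj.mem_of_forall_iterate_mem (S := Subtype.val ⁻¹' E) (x := ⟨x, hx⟩) (N := N)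
      (hE.1.preimage Subtype.val_injective.injOn) fun n hn ↦ ?_
    simpa [Subgroup.coe_iterate_commutatorElementHom] using hN n hn
  have hEeq : E = D := hED.antisymm hDE
  exact ⟨hEeq, hEeq ▸ hE.1⟩
end

section
/- Let G be a group and a ∈ G, and let E(a) be the minimal Engel sink of a, assumed finite, such that each element of E(a) is of the form [y,a] with y ∈ E(a). If {N_i} is a family of normal subgroups of G each intersecting E(a) trivially, then their join ⟨∪ N_i⟩ also intersects E(a) trivially. -/
open scoped commutatorElement

lemma engel_one {G : Type*} [Group G] (a : G) : ∀ n, engel a 1 n = 1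
  | 0 => rfl
  | n + 1 => by
    show ⁅engel a 1 n, a⁆ = 1
    rw [engel_one a n]
    simp [commutatorElement_def]

lemma engel_add {G : Type*} [Group G] (a x : G) (m : ℕ) :
    ∀ n, engel a x (m + n) = engel a (engel a x m) n
  | 0 => rfl
  | n + 1 => by
    show engel a x (m + n + 1) = ⁅engel a (engel a x m) n, a⁆
    rw [← engel_add a x m n]
    rfl

lemma map_engel {G H : Type*} [Group G] [Group H] (f : G →* H) (a x : G) :
    ∀ n, f (engel a x n) = engel (f a) (f x) n
  | 0 => rfl
  | n + 1 => by
    show f ⁅engel a x n, a⁆ = ⁅engel (f a) (f x) n, f a⁆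
    rw [map_commutatorElement, map_engel f a x n]

lemma engel_mem_s18 {G : Type*} [Group G] {N : Subgroup G} (hN : N.Normal)
    (a : G) {x : G} (hx : x ∈ N) : ∀ n, engel a x n ∈ N
  | 0 => hx
  | n + 1 => by
    show ⁅engel a x n, a⁆ ∈ N
    have h := engel_mem_s18 hN a hx n
    rw [commutatorElement_def, mul_assoc, mul_assoc]
    exact mul_mem h (by rw [← mul_assoc]; exact hN.conj_mem _ (inv_mem h) a)

lemma engel_pow_period {G : Type*} [Group G] {a x : G} {p : ℕ}
    (h : engel a x p = x) : ∀ k, engel a x (k * p) = x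
  | 0 => by rw [Nat.zero_mul]; rfl
  | k + 1 => by
    rw [Nat.succ_mul, engel_add, engel_pow_period h k, h]

lemma engel_eventually_periodic {G : Type*} [Group G] {a x : G} {s p : ℕ}
    (h : engel a x (s + p) = engel a x s) :
    ∀ d, engel a x (s + d + p) = engel a x (s + d) := by
  intro d
  have h1 : s + d + p = s + p + d := by omega
  rw [h1, engel_add, h, ← engel_add]

/-- Every element of the minimal sink is periodic: the set of
periodic points of `E` is a sink. -/
lemma periodic_of_min {G : Type*} [Group G] {a : G} {E : Set G}
    (hE : IsSink a E) (hmin : ∀ T : Set G, IsSink a T → E ⊆ T) :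
    ∀ x ∈ E, ∃ p ≥ 1, engel a x p = x := by
  set R : Set G := {e | e ∈ E ∧ ∃ p ≥ 1, engel a e p = e} with hR
  have hsink : IsSink a R := by
    constructor
    · exact hE.1.subset fun e he => he.1
    · intro x
      obtain ⟨M, hM⟩ := hE.2 x
      have hmaps : Set.MapsTo (fun n : ℕ => engel a x (M + n)) Set.univ E := by
        intro n _
        exact hM (M + n) (Nat.le_add_right M n)
      obtain ⟨n₁, -, n₂, -, hne, heq⟩ :=
        Set.infinite_univ.exists_ne_map_eq_of_mapsTo hmaps hE.1
      -- wlog n₁ ≤ n₂, get s with engel a x (s + p) = engel a x s, p ≥ 1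
      have hkey : ∃ s ≥ M, ∃ p ≥ 1, engel a x (s + p) = engel a x s := by
        rcases Nat.lt_or_ge n₁ n₂ with hlt | hge
        · exact ⟨M + n₁, Nat.le_add_right M n₁, n₂ - n₁, by omega,
            by rw [show M + n₁ + (n₂ - n₁) = M + n₂ by omega]; exact heq.symm⟩
        · have hlt : n₂ < n₁ := lt_of_le_of_ne hge (Ne.symm hne)
          exact ⟨M + n₂, Nat.le_add_right M n₂, n₁ - n₂, by omega,
            by rw [show M + n₂ + (n₁ - n₂) = M + n₁ by omega]; exact heq⟩
      obtain ⟨s, hsM, p, hp1, hsp⟩ := hkey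
      refine ⟨s, fun n hn => ⟨hM n (le_trans hsM hn), p, hp1, ?_⟩⟩
      have := engel_eventually_periodic hsp (n - s)
      rw [show s + (n - s) = n by omega] at this
      rw [← engel_add]
      exact this
  intro x hx
  exact (hmin R hsink hx).2

theorem stmt_18 {G : Type*} [Group G] (a : G) (E : Set G)
    (hE : IsSink a E) (hmin : ∀ T : Set G, IsSink a T → E ⊆ T)
    (hcomm : ∀ x ∈ E, ∃ y ∈ E, x = ⁅y, a⁆)
    {ι : Type*} (N : ι → Subgroup G)
    (hnorm : ∀ i, (N i).Normal)
    (htriv : ∀ i, ((N i : Set G) ∩ E) ⊆ {1}) :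
    (((⨆ i, N i : Subgroup G) : Set G) ∩ E) ⊆ {1} := by
  -- Step 1: for any finite product of elements of the `N i`, the engel sequence
  -- is eventually trivial.
  have key : ∀ l : List G, (∀ y ∈ l, ∃ i, y ∈ N i) →
      ∃ M : ℕ, ∀ n ≥ M, engel a l.prod n = 1 := by
    intro l
    induction l with
    | nil => intro _; exact ⟨0, fun n _ => by simpa using engel_one a n⟩
    | cons u l ih =>
      intro hmem
      obtain ⟨i, hu⟩ := hmem u List.mem_cons_self
      obtain ⟨Mw, hMw⟩ := ih fun y hy => hmem y (List.mem_cons_of_mem u hy)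
      obtain ⟨M', hM'⟩ := hE.2 (u * l.prod)
      refine ⟨max Mw M', fun n hn => ?_⟩
      have hinNi : engel a (u * l.prod) n ∈ N i := by
        haveI := hnorm i
        rw [← QuotientGroup.eq_one_iff]
        have : ((u * l.prod : G) : G ⧸ N i) = (l.prod : G) := by
          rw [QuotientGroup.mk_mul, (QuotientGroup.eq_one_iff u).mpr hu, one_mul]
        calc ((engel a (u * l.prod) n : G) : G ⧸ N i)
            = engel ((a : G) : G ⧸ N i) ((u * l.prod : G) : G ⧸ N i) n :=
              map_engel (QuotientGroup.mk' (N i)) a (u * l.prod) n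
          _ = engel ((a : G) : G ⧸ N i) ((l.prod : G) : G ⧸ N i) n := by rw [this]
          _ = ((engel a l.prod n : G) : G ⧸ N i) :=
              (map_engel (QuotientGroup.mk' (N i)) a l.prod n).symm
          _ = 1 := by rw [hMw n (le_trans (le_max_left _ _) hn)]; rfl
      have hinE : engel a (u * l.prod) n ∈ E :=
        hM' n (le_trans (le_max_right _ _) hn)
      have := htriv i ⟨hinNi, hinE⟩
      simpa [List.prod_cons] using this
  -- Step 2: take `x` in the join and in `E`.
  rintro x ⟨hxN, hxE⟩
  rw [SetLike.mem_coe, Subgroup.iSup_eq_closure] at hxN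
  have hxN' : x ∈ Submonoid.closure ((⋃ i, (N i : Set G)) ∪ (⋃ i, (N i : Set G))⁻¹) := by
    rw [← Subgroup.closure_toSubmonoid]
    exact hxN
  obtain ⟨l, hl, hprod⟩ := Submonoid.exists_list_of_mem_closure hxN'
  have hl' : ∀ y ∈ l, ∃ i, y ∈ N i := by
    intro y hy
    rcases hl y hy with h | h
    · obtain ⟨s, ⟨i, rfl⟩, hs⟩ := h
      exact ⟨i, hs⟩
    · rw [Set.mem_inv] at h
      obtain ⟨s, ⟨i, rfl⟩, hs⟩ := h
      exact ⟨i, by simpa using inv_mem hs⟩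
  obtain ⟨M, hM⟩ := key l hl'
  rw [hprod] at hM
  obtain ⟨p, hp, hper⟩ := periodic_of_min hE hmin x hxE
  have hx1 : x = engel a x (M * p) := (engel_pow_period hper M).symm
  have : engel a x (M * p) = 1 := hM _ (Nat.le_mul_of_pos_right M hp)
  exact Set.mem_singleton_iff.mpr (hx1.trans this)
end
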